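/- For every x ∈ ℝ³∖{0} (r=|x|) the identity ∫_{ℝ³} φ'(E(x,v)) w² dv = −(e^{−μ₀(r)}/γ)(γ p₀(r) + ρ₀(r)) holds; if moreover λ₀, μ₀ ∈ C¹([0,∞)) satisfy the static Einstein field equations, then this quantity also equals −(e^{−2λ₀(r)−μ₀(r)}/(4πγ²r)) (λ₀'(r)+μ₀'(r)). -/

import Mathlib

noncomputable section

open Real MeasureTheory

abbrev E3 := EuclideanSpace ℝ (Fin 3)

/-- Euclidean dot product on `E3`. -/
def dot3 (x v : E3) : ℝ := ∑ i, x i * v i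

/-- `⟨v⟩ = √(1+γ|v|²)`. -/
def jap (γ : ℝ) (v : E3) : ℝ := Real.sqrt (1 + γ * ‖v‖ ^ 2)

/-- The radial momentum `w = (x·v)/|x|`. -/
def wrad (x v : E3) : ℝ := dot3 x v / ‖x‖

/-- The particle energy `E(x,v) = e^{μ₀(|x|)}⟨v⟩`. -/
def energy (γ : ℝ) (μ₀ : ℝ → ℝ) (z : E3 × E3) : ℝ :=
  Real.exp (μ₀ ‖z.1‖) * jap γ z.2

/-- The Poisson bracket `{f,g} = ∂ₓf·∂ᵥg − ∂ᵥf·∂ₓg`. -/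
def pb (f g : E3 × E3 → ℝ) (z : E3 × E3) : ℝ :=
  ∑ i : Fin 3,
    (fderiv ℝ f z (EuclideanSpace.single i 1, 0) * fderiv ℝ g z (0, EuclideanSpace.single i 1)
     - fderiv ℝ f z (0, EuclideanSpace.single i 1) * fderiv ℝ g z (EuclideanSpace.single i 1, 0))

/-- Action of a `3×3` matrix on `E3`. -/
def matAct (A : Matrix (Fin 3) (Fin 3) ℝ) (x : E3) : E3 :=
  (WithLp.equiv 2 (Fin 3 → ℝ)).symm (A.mulVec ((WithLp.equiv 2 (Fin 3 → ℝ)) x))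

/-- Spherical symmetry: invariance under the canonical action of SO(3). -/
def SphSym (h : E3 × E3 → ℝ) : Prop :=
  ∀ A : Matrix (Fin 3) (Fin 3) ℝ, A ∈ Matrix.orthogonalGroup (Fin 3) ℝ → A.det = 1 →
    ∀ x v : E3, h (matAct A x, matAct A v) = h (x, v)

/-- Radial unit vector, used to define radial representatives of
spherically symmetric quantities. -/
def er : E3 := EuclideanSpace.single 0 1

/-- The steady state distribution `f₀ = φ(E)`. -/
def f0 (γ : ℝ) (μ₀ φ : ℝ → ℝ) : E3 × E3 → ℝ := fun z => φ (energy γ μ₀ z)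

/-- The steady state energy density `ρ₀(r) = ∫ ⟨v⟩ f₀ dv`. -/
def rho0 (γ : ℝ) (μ₀ φ : ℝ → ℝ) (r : ℝ) : ℝ :=
  ∫ v : E3, jap γ v * f0 γ μ₀ φ (r • er, v)

/-- The steady state radial pressure `p₀(r) = ∫ (w²/⟨v⟩) f₀ dv`. -/
def p0 (γ : ℝ) (μ₀ φ : ℝ → ℝ) (r : ℝ) : ℝ :=
  ∫ v : E3, ((wrad (r • er) v) ^ 2 / jap γ v) * f0 γ μ₀ φ (r • er, v)

/-- The static Einstein field equations for a steady state `(f₀,lam0,μ₀)`. -/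
def FieldEqs (γ : ℝ) (lam0 μ₀ φ : ℝ → ℝ) : Prop :=
  (∀ r > 0, Real.exp (-2 * lam0 r) * (2 * r * deriv lam0 r - 1) + 1
      = 8 * π * γ * r ^ 2 * rho0 γ μ₀ φ r) ∧
  (∀ r > 0, Real.exp (-2 * lam0 r) * (2 * r * deriv μ₀ r + 1) - 1
      = 8 * π * γ ^ 2 * r ^ 2 * p0 γ μ₀ φ r)

/-- The linearly dynamically accessible perturbation generated by `h`. -/
def deltaF (γ : ℝ) (lam0 μ₀ φ : ℝ → ℝ) (h : E3 × E3 → ℝ) : E3 × E3 → ℝ :=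
  fun z =>
    Real.exp (-lam0 ‖z.1‖) * pb h (f0 γ μ₀ φ) z
    + 4 * π * γ ^ 3 * ‖z.1‖ * Real.exp (2 * μ₀ ‖z.1‖ + lam0 ‖z.1‖) *
        deriv φ (energy γ μ₀ z) * ((wrad z.1 z.2) ^ 2 / jap γ z.2) *
        ∫ vt : E3, deriv φ (energy γ μ₀ (z.1, vt)) * h (z.1, vt) * wrad z.1 vt

/-- `δρ(s) = ∫ ⟨v⟩ δf dv` at radius `s`. -/
def deltaRho (γ : ℝ) (δf : E3 × E3 → ℝ) (s : ℝ) : ℝ :=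
  ∫ v : E3, jap γ v * δf (s • er, v)

/-- The induced metric perturbation `δλ(r) = γ e^{2lam0} (4π/r) ∫₀^r s² δρ(s) ds`. -/
def deltaLambda (γ : ℝ) (lam0 : ℝ → ℝ) (δf : E3 × E3 → ℝ) (r : ℝ) : ℝ :=
  γ * Real.exp (2 * lam0 r) * (4 * π / r) * ∫ s in (0:ℝ)..r, s ^ 2 * deltaRho γ δf s

/-!
With `a = e^{μ₀(r)}` and `u = x/|x|`, the function `v ↦ φ(a⟨v⟩) ⟨v⟩ ⟪u, v⟫` has compact support,
and its derivative in the direction `u` is `aγ φ'(a⟨v⟩) ⟪u, v⟫² + φ(a⟨v⟩) (⟨v⟩ + γ ⟪u, v⟫² / ⟨v⟩)`.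
This derivative integrates to zero over `ℝ³`, which is the first identity once a reflection of
velocity space turns `⟪u, v⟫` into the radial component used in `p₀`. Adding the two field
equations gives `e^{-2λ₀} (λ₀' + μ₀') = 4πγ r (γ p₀ + ρ₀)`, which turns it into the second.
-/

open Filter Topology
open scoped RealInnerProductSpace

section Rotation

variable {E : Type*} [NormedAddCommGroup E] [InnerProductSpace ℝ E] [FiniteDimensional ℝ E]
  [MeasurableSpace E] [BorelSpace E]

theorem integral_norm_inner_eq_of_norm_eq (G : ℝ → ℝ → ℝ) {u u' : E} (h : ‖u‖ = ‖u'‖) :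
    ∫ v, G ‖v‖ ⟪u, v⟫ = ∫ v, G ‖v‖ ⟪u', v⟫ := by
  set T := Submodule.reflection (ℝ ∙ (u - u'))ᗮ
  calc ∫ v, G ‖v‖ ⟪u, v⟫ = ∫ v, G ‖T v‖ ⟪T u, T v⟫ := by simp
    _ = ∫ v, G ‖v‖ ⟪u', v⟫ := by
      rw [Submodule.reflection_sub h]
      exact T.measurePreserving.integral_comp' (f := T.toMeasurableEquiv) (fun v => G ‖v‖ ⟪u', v⟫)

end Rotation

section Jap

variable {γ : ℝ}

lemma jap_pos (hγ : 0 ≤ γ) (v : E3) : 0 < jap γ v :=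
  Real.sqrt_pos.mpr (by positivity)

@[fun_prop]
lemma continuous_jap : Continuous (jap γ) := by
  unfold jap; fun_prop

lemma sqrt_mul_norm_le_jap (hγ : 0 ≤ γ) (v : E3) : √γ * ‖v‖ ≤ jap γ v := by
  rw [← Real.sqrt_sq (norm_nonneg v), ← Real.sqrt_mul hγ]
  exact Real.sqrt_le_sqrt (by linarith)

lemma tendsto_mul_jap_cocompact {a : ℝ} (hγ : 0 < γ) (ha : 0 < a) :
    Tendsto (fun v => a * jap γ v) (cocompact E3) atTop := by
  refine tendsto_atTop_mono (fun v => ?_)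
    ((tendsto_norm_cocompact_atTop.const_mul_atTop (by positivity : 0 < a * √γ)))
  rw [mul_assoc]
  exact mul_le_mul_of_nonneg_left (sqrt_mul_norm_le_jap hγ.le v) ha.le

lemma hasCompactSupport_comp_mul_jap {a E₀ : ℝ} (hγ : 0 < γ) (ha : 0 < a) {ψ : ℝ → ℝ}
    (hψ : ∀ s, E₀ < s → ψ s = 0) : HasCompactSupport fun v => ψ (a * jap γ v) := by
  rw [hasCompactSupport_iff_eventuallyEq, coclosedCompact_eq_cocompact]
  filter_upwards [(tendsto_mul_jap_cocompact hγ ha).eventually_gt_atTop E₀] with v hv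
  exact hψ _ hv

lemma integrable_mul_comp_mul_jap {a E₀ : ℝ} (hγ : 0 < γ) (ha : 0 < a) {c : E3 → ℝ}
    (hc : Continuous c) {ψ : ℝ → ℝ} (hψ : Continuous ψ) (hψ0 : ∀ s, E₀ < s → ψ s = 0) :
    Integrable fun v => c v * ψ (a * jap γ v) :=
  (hc.mul (by fun_prop)).integrable_of_hasCompactSupport
    (hasCompactSupport_comp_mul_jap hγ ha hψ0).mul_left

lemma hasFDerivAt_jap (hγ : 0 ≤ γ) (v : E3) :
    HasFDerivAt (jap γ) ((γ / jap γ v) • innerSL ℝ v) v := by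
  refine ((((hasStrictFDerivAt_norm_sq v).hasFDerivAt.const_mul γ).const_add 1).sqrt
    (by positivity)).congr_fderiv ?_
  ext w
  simp only [smul_apply, innerSL_apply_apply, smul_eq_mul, jap]
  field_simp
  ring

end Jap

lemma deriv_eq_zero_of_lt {φ : ℝ → ℝ} {E₀ : ℝ} (hφ : ∀ s, E₀ < s → φ s = 0) {s : ℝ}
    (hs : E₀ < s) : deriv φ s = 0 := by
  have : φ =ᶠ[𝓝 s] fun _ => 0 := by
    filter_upwards [Ioi_mem_nhds hs] with t ht using hφ t ht
  simp [this.deriv_eq]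

theorem integral_comp_mul_jap_mul_add_eq {γ a E₀ : ℝ} (hγ : 0 < γ) (ha : 0 < a)
    {φ : ℝ → ℝ} (hφ : ContDiff ℝ 1 φ) (hφ0 : ∀ s, E₀ < s → φ s = 0) {u : E3} (hu : ‖u‖ = 1) :
    (∫ v, jap γ v * φ (a * jap γ v)) + γ * ∫ v, ⟪u, v⟫ ^ 2 / jap γ v * φ (a * jap γ v)
      = -(a * γ * ∫ v, deriv φ (a * jap γ v) * ⟪u, v⟫ ^ 2) := by
  have hφc := hφ.continuous
  have hjap v := (jap_pos hγ.le v).ne'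
  have hD : Integrable fun v => deriv φ (a * jap γ v) * ⟪u, v⟫ ^ 2 := by
    simpa only [mul_comm] using integrable_mul_comp_mul_jap hγ ha (by fun_prop : Continuous
      fun v => ⟪u, v⟫ ^ 2) (hφ.continuous_deriv le_rfl) fun s hs => deriv_eq_zero_of_lt hφ0 hs
  have hP : Integrable fun v => ⟪u, v⟫ ^ 2 / jap γ v * φ (a * jap γ v) :=
    integrable_mul_comp_mul_jap hγ ha (by fun_prop (disch := exact hjap)) hφc hφ0
  have hR : Integrable fun v => jap γ v * φ (a * jap γ v) :=
    integrable_mul_comp_mul_jap hγ ha continuous_jap hφc hφ0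
  have hF v : HasFDerivAt (fun v => φ (a * jap γ v))
      (deriv φ (a * jap γ v) • a • (γ / jap γ v) • innerSL ℝ v) v :=
    (hφ.differentiable one_ne_zero _).hasDerivAt.comp_hasFDerivAt v
      ((hasFDerivAt_jap hγ.le v).const_mul a)
  have hG v : HasFDerivAt (fun v => jap γ v * ⟪u, v⟫)
      (jap γ v • innerSL ℝ u + ⟪u, v⟫ • (γ / jap γ v) • innerSL ℝ v) v :=
    (hasFDerivAt_jap hγ.le v).mul ((innerSL ℝ u).hasFDerivAt)
  have hF'G v : deriv φ (a * jap γ v) * (a * (γ / jap γ v * ⟪v, u⟫)) * (jap γ v * ⟪u, v⟫) =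
      a * γ * (deriv φ (a * jap γ v) * ⟪u, v⟫ ^ 2) := by
    have := hjap v
    rw [real_inner_comm v u]
    field_simp
  have hFG' v : φ (a * jap γ v) * (jap γ v * 1 ^ 2 + ⟪u, v⟫ * (γ / jap γ v * ⟪v, u⟫)) =
      jap γ v * φ (a * jap γ v) + γ * (⟪u, v⟫ ^ 2 / jap γ v * φ (a * jap γ v)) := by
    rw [real_inner_comm v u]; ring
  rw [← integral_const_mul, ← integral_const_mul, ← integral_add hR (hP.const_mul γ)]
  have ibp := integral_bilinear_hasFDerivAt_right_eq_neg_left_of_integrable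
    (B := ContinuousLinearMap.mul ℝ ℝ) (μ := volume) (v := u) ?_ ?_ ?_
    (fun v _ => hF v) (fun v _ => hG v)
  all_goals simp only [ContinuousLinearMap.mul_apply', add_apply, smul_apply,
    innerSL_apply_apply, smul_eq_mul, real_inner_self_eq_norm_sq, hu, hF'G, hFG'] at *
  · exact ibp
  · exact hD.const_mul _
  · exact hR.add (hP.const_mul γ)
  · simpa only [mul_comm, mul_assoc] using integrable_mul_comp_mul_jap hγ ha
      (by fun_prop : Continuous fun v => jap γ v * ⟪u, v⟫) hφc hφ0

theorem integral_deriv_comp_mul_jap_mul_inner_sq {γ a E₀ : ℝ} (hγ : 0 < γ) (ha : 0 < a)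
    {φ : ℝ → ℝ} (hφ : ContDiff ℝ 1 φ) (hφ0 : ∀ s, E₀ < s → φ s = 0) {u : E3} (hu : ‖u‖ = 1) :
    ∫ v, deriv φ (a * jap γ v) * ⟪u, v⟫ ^ 2 =
      -(a⁻¹ / γ) * ((γ * ∫ v, ⟪u, v⟫ ^ 2 / jap γ v * φ (a * jap γ v))
        + ∫ v, jap γ v * φ (a * jap γ v)) := by
  rw [add_comm, integral_comp_mul_jap_mul_add_eq hγ ha hφ hφ0 hu]
  field_simp

lemma dot3_eq_inner (x v : E3) : dot3 x v = ⟪x, v⟫ := by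
  simp [dot3, PiLp.inner_apply, mul_comm]

lemma wrad_eq_inner (x v : E3) : wrad x v = ⟪‖x‖⁻¹ • x, v⟫ := by
  rw [wrad, dot3_eq_inner, real_inner_smul_left, div_eq_inv_mul]

lemma norm_smul_er {r : ℝ} (hr : 0 ≤ r) : ‖r • er‖ = r := by
  simp [er, norm_smul, abs_of_nonneg hr]

lemma rho0_eq_integral {γ r : ℝ} (hr : 0 ≤ r) (μ₀ φ : ℝ → ℝ) :
    rho0 γ μ₀ φ r = ∫ v, jap γ v * φ (exp (μ₀ r) * jap γ v) := by
  simp only [rho0, f0, energy, norm_smul_er hr]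

lemma p0_eq_integral_inner_sq {γ r : ℝ} (hr : 0 < r) (μ₀ φ : ℝ → ℝ) {u : E3} (hu : ‖u‖ = 1) :
    p0 γ μ₀ φ r = ∫ v, ⟪u, v⟫ ^ 2 / jap γ v * φ (exp (μ₀ r) * jap γ v) := by
  simp only [p0, f0, energy, wrad_eq_inner, norm_smul_er hr.le, inv_smul_smul₀ hr.ne']
  exact integral_norm_inner_eq_of_norm_eq
    (fun s t => t ^ 2 / √(1 + γ * s ^ 2) * φ (exp (μ₀ r) * √(1 + γ * s ^ 2)))
    (by rw [hu, ← norm_smul_er zero_le_one, one_smul])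

theorem integral_deriv_energy_mul_wrad_sq {γ E₀ : ℝ} (hγ : 0 < γ) {μ₀ φ : ℝ → ℝ}
    (hφ : ContDiff ℝ 1 φ) (hφzero : ∀ s, E₀ ≤ s → φ s = 0) {x : E3} (hx : x ≠ 0) :
    ∫ v, deriv φ (energy γ μ₀ (x, v)) * wrad x v ^ 2 =
      -(exp (-μ₀ ‖x‖) / γ) * (γ * p0 γ μ₀ φ ‖x‖ + rho0 γ μ₀ φ ‖x‖) := by
  have hu : ‖‖x‖⁻¹ • x‖ = 1 := norm_smul_inv_norm hx
  simp only [energy, wrad_eq_inner]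
  rw [integral_deriv_comp_mul_jap_mul_inner_sq hγ (exp_pos _) hφ (fun s hs => hφzero s hs.le) hu,
    p0_eq_integral_inner_sq (norm_pos_iff.mpr hx) μ₀ φ hu, rho0_eq_integral (norm_nonneg x), exp_neg]

lemma FieldEqs.exp_mul_deriv_add {γ : ℝ} {lam0 μ₀ φ : ℝ → ℝ} (h : FieldEqs γ lam0 μ₀ φ)
    {r : ℝ} (hr : 0 < r) :
    exp (-2 * lam0 r) * (deriv lam0 r + deriv μ₀ r) =
      4 * π * γ * r * (γ * p0 γ μ₀ φ r + rho0 γ μ₀ φ r) := by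
  apply mul_left_cancel₀ (by positivity : 2 * r ≠ 0)
  linear_combination h.1 r hr + h.2 r hr

theorem integral_phi_prime_w_sq_general
    (γ : ℝ) (hγ : 0 < γ)
    (mu0 : ℝ → ℝ)
    (E₀ : ℝ)
    (φ : ℝ → ℝ) (hφ : ContDiff ℝ 1 φ)
    (hφzero : ∀ s, E₀ ≤ s → φ s = 0) :
    (∀ x : E3, x ≠ 0 →
      ∫ v : E3, deriv φ (energy γ mu0 (x, v)) * (wrad x v) ^ 2 =
        -(Real.exp (-mu0 ‖x‖) / γ) * (γ * p0 γ mu0 φ ‖x‖ + rho0 γ mu0 φ ‖x‖)) ∧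
    (∀ lam0 : ℝ → ℝ, ContDiff ℝ 1 lam0 → ContDiff ℝ 1 mu0 →
      FieldEqs γ lam0 mu0 φ →
      ∀ x : E3, x ≠ 0 →
        ∫ v : E3, deriv φ (energy γ mu0 (x, v)) * (wrad x v) ^ 2 =
          -(Real.exp (-2 * lam0 ‖x‖ - mu0 ‖x‖) / (4 * π * γ ^ 2 * ‖x‖)) *
            (deriv lam0 ‖x‖ + deriv mu0 ‖x‖)) := by
  have part1 x (hx : x ≠ 0) := integral_deriv_energy_mul_wrad_sq (μ₀ := mu0) hγ hφ hφzero hx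
  refine ⟨part1, fun lam0 _ _ hfe x hx => ?_⟩
  have hr := norm_pos_iff.mpr hx
  have hsum := hfe.exp_mul_deriv_add hr
  rw [part1 x hx]
  calc _ = -(exp (-mu0 ‖x‖) / (4 * π * γ ^ 2 * ‖x‖)) *
        (exp (-2 * lam0 ‖x‖) * (deriv lam0 ‖x‖ + deriv mu0 ‖x‖)) := by
        rw [hsum]; field_simp
    _ = _ := by rw [sub_eq_add_neg, exp_add]; ring

/-- `∫ φ'(E) w² dv = −(e^{−μ₀}/γ)(γp₀+ρ₀)`, and under the static
Einstein field equations this also equals `−(e^{−2λ₀−μ₀}/(4πγ²r))(λ₀'+μ₀')`. -/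
theorem integral_phi_prime_w_sq
    (γ : ℝ) (hγ : 0 < γ)
    (mu0 : ℝ → ℝ)
    (E₀ : ℝ) (hE₀ : 0 < E₀)
    (φ : ℝ → ℝ) (hφ : ContDiff ℝ 1 φ)
    (hφzero : ∀ s, E₀ ≤ s → φ s = 0)
    (hφdec : ∀ s, s < E₀ → deriv φ s < 0) :
    (∀ x : E3, x ≠ 0 →
      ∫ v : E3, deriv φ (energy γ mu0 (x, v)) * (wrad x v) ^ 2 =
        -(Real.exp (-mu0 ‖x‖) / γ) * (γ * p0 γ mu0 φ ‖x‖ + rho0 γ mu0 φ ‖x‖)) ∧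
    (∀ lam0 : ℝ → ℝ, ContDiff ℝ 1 lam0 → ContDiff ℝ 1 mu0 →
      FieldEqs γ lam0 mu0 φ →
      ∀ x : E3, x ≠ 0 →
        ∫ v : E3, deriv φ (energy γ mu0 (x, v)) * (wrad x v) ^ 2 =
          -(Real.exp (-2 * lam0 ‖x‖ - mu0 ‖x‖) / (4 * π * γ ^ 2 * ‖x‖)) *
            (deriv lam0 ‖x‖ + deriv mu0 ‖x‖)) :=
  integral_phi_prime_w_sq_general γ hγ mu0 E₀ φ hφ hφzero
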